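/- arXiv:1103.5170 — 5 statements merged into one kernel-verified Lean document; each statement's English description precedes it below -/
import Mathlib

section
/- Let f(D) be a real-valued function on datasets with sensitivity σ(f) = max over neighboring D₁,D₂ of |f(D₁)−f(D₂)|. Then the mechanism L(D) = f(D) + X, where X ~ Lap(σ(f)/ε), is ε-differentially private. -/
open MeasureTheory

/-- Two datasets (multisets of tuples) are neighboring if they differ in the
presence of exactly one tuple. -/
def Neighboring {T : Type*} (D₁ D₂ : Multiset T) : Prop :=
  ∃ t : T, D₁ = t ::ₘ D₂ ∨ D₂ = t ::ₘ D₁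

/-- Density of the Laplace distribution with scale `b`. -/
noncomputable def laplacePDF (b x : ℝ) : ℝ := (1 / (2 * b)) * Real.exp (-|x| / b)

/-- The Laplace mechanism for `f`: output `f(D) + X` with `X ~ Lap(b)`,
i.e. the output distribution has density `laplacePDF b (x - f D)`. -/
noncomputable def laplaceMechanism {T : Type*} (f : Multiset T → ℝ) (b : ℝ)
    (D : Multiset T) : Measure ℝ :=
  (volume : Measure ℝ).withDensity (fun x => ENNReal.ofReal (laplacePDF b (x - f D)))

/-!
Shifting the centre of a Laplace density by `Δ` changes it pointwise by a factor of at most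
`exp (|Δ| / b)` (reverse triangle inequality in the exponent); integrating this bound over `S`
gives the privacy inequality, since `|Δ| / b ≤ ε` for `b = σf / ε` and `|Δ| ≤ σf`.
-/

theorem laplacePDF_le_exp_mul {b : ℝ} (hb : 0 ≤ b) (x y : ℝ) :
    laplacePDF b x ≤ Real.exp (|x - y| / b) * laplacePDF b y := by
  have hexp : -|x| / b ≤ |x - y| / b + -|y| / b := by
    rw [← add_div]
    gcongr
    linarith [abs_sub_abs_le_abs_sub y x, abs_sub_comm x y]
  calc laplacePDF b x = 1 / (2 * b) * Real.exp (-|x| / b) := rfl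
    _ ≤ 1 / (2 * b) * (Real.exp (|x - y| / b) * Real.exp (-|y| / b)) := by
        rw [← Real.exp_add]
        gcongr
    _ = Real.exp (|x - y| / b) * laplacePDF b y := by
        unfold laplacePDF
        ring

theorem laplaceMechanism_le_smul {T : Type*} (f : Multiset T → ℝ) {b : ℝ} (hb : 0 ≤ b)
    (D₁ D₂ : Multiset T) :
    laplaceMechanism f b D₁ ≤
      ENNReal.ofReal (Real.exp (|f D₁ - f D₂| / b)) • laplaceMechanism f b D₂ := by
  unfold laplaceMechanism
  rw [← withDensity_smul' _ _ ENNReal.ofReal_ne_top]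
  refine withDensity_mono (Filter.Eventually.of_forall fun x => ?_)
  rw [Pi.smul_apply, smul_eq_mul, ← ENNReal.ofReal_mul (Real.exp_pos _).le]
  refine ENNReal.ofReal_le_ofReal ?_
  convert laplacePDF_le_exp_mul hb (x - f D₁) (x - f D₂) using 4
  rw [sub_sub_sub_cancel_left, abs_sub_comm]

/-- If `f` has sensitivity `σf` (the maximum change of `f` between neighboring
datasets), then the mechanism `L(D) = f(D) + X` with `X ~ Lap(σf/ε)` is
`ε`-differentially private. -/
theorem laplace_mechanism_diffPrivate {T : Type*} (f : Multiset T → ℝ)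
    (ε σf : ℝ) (hε : 0 < ε) (hσ : 0 < σf)
    (hsens : ∀ D₁ D₂ : Multiset T, Neighboring D₁ D₂ → |f D₁ - f D₂| ≤ σf) :
    ∀ D₁ D₂ : Multiset T, Neighboring D₁ D₂ → ∀ S : Set ℝ, MeasurableSet S →
      laplaceMechanism f (σf / ε) D₁ S ≤
        ENNReal.ofReal (Real.exp ε) * laplaceMechanism f (σf / ε) D₂ S := by
  intro D₁ D₂ hN S _
  have hb : 0 < σf / ε := div_pos hσ hε
  have hratio : |f D₁ - f D₂| / (σf / ε) ≤ ε := by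
    rw [div_le_iff₀ hb, mul_div_cancel₀ σf hε.ne']
    exact hsens D₁ D₂ hN
  calc laplaceMechanism f (σf / ε) D₁ S
      ≤ ENNReal.ofReal (Real.exp (|f D₁ - f D₂| / (σf / ε))) * laplaceMechanism f (σf / ε) D₂ S :=
        Measure.le_iff'.mp (laplaceMechanism_le_smul f hb.le D₁ D₂) S
    _ ≤ ENNReal.ofReal (Real.exp ε) * laplaceMechanism f (σf / ε) D₂ S := by
        gcongr
end

section
/- Fix h ≥ 0 and ε > 0. Among all positive sequences (ε_0,…,ε_h) with Σ_{i=0}^h ε_i = ε, the sum Σ_{i=0}^h 2^{h−i}/ε_i² is minimized by ε_i = 2^{(h−i)/3} · ε · (2^{1/3}−1)/(2^{(h+1)/3}−1), and the minimum value is (2^{(h+1)/3}−1)³ / (ε²(2^{1/3}−1)³). -/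
/-! Write the weights as cubes, `2 ^ (h - i) = a_i ^ 3` with `a_i = 2 ^ ((h - i) / 3)`. Hölder's
inequality with exponents `3` and `3/2` (Radon's inequality) gives
`(∑ a_i) ^ 3 ≤ (∑ ε_i) ^ 2 * ∑ a_i ^ 3 / ε_i ^ 2`, with equality for `ε_i ∝ a_i`; the sum
`∑ a_i` is geometric with ratio `2 ^ (1/3)`. -/

open Finset Real

namespace Finset

variable {ι : Type*} (s : Finset ι) {a e : ι → ℝ}

theorem pow_succ_sum_le_pow_sum_mul_sum_div (n : ℕ) (ha : ∀ i, 0 ≤ a i) (he : ∀ i, 0 < e i) :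
    (∑ i ∈ s, a i) ^ (n + 1) ≤ (∑ i ∈ s, e i) ^ n * ∑ i ∈ s, a i ^ (n + 1) / e i ^ n := by
  have hp : (1 : ℝ) ≤ (n + 1 : ℕ) := by norm_cast; omega
  have holder := inner_le_weight_mul_Lp_of_nonneg s hp e (fun i => a i / e i)
    (fun i => (he i).le) (fun i => div_nonneg (ha i) (he i).le)
  have hsum : ∑ i ∈ s, e i * (a i / e i) = ∑ i ∈ s, a i :=
    sum_congr rfl fun i _ => mul_div_cancel₀ _ (he i).ne'
  have hterm : ∑ i ∈ s, e i * (a i / e i) ^ ((n + 1 : ℕ) : ℝ) =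
      ∑ i ∈ s, a i ^ (n + 1) / e i ^ n :=
    sum_congr rfl fun i _ => by
      have := (he i).ne'
      rw [rpow_natCast, div_pow]
      field_simp
      ring
  rw [hsum, hterm] at holder
  have hE : 0 ≤ ∑ i ∈ s, e i := sum_nonneg fun i _ => (he i).le
  have hT : 0 ≤ ∑ i ∈ s, a i ^ (n + 1) / e i ^ n :=
    sum_nonneg fun i _ => div_nonneg (pow_nonneg (ha i) _) (pow_nonneg (he i).le _)
  calc (∑ i ∈ s, a i) ^ (n + 1)
      ≤ ((∑ i ∈ s, e i) ^ (1 - ((n + 1 : ℕ) : ℝ)⁻¹) *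
          (∑ i ∈ s, a i ^ (n + 1) / e i ^ n) ^ ((n + 1 : ℕ) : ℝ)⁻¹) ^ (n + 1) :=
        pow_le_pow_left₀ (sum_nonneg fun i _ => ha i) holder _
    _ = (∑ i ∈ s, e i) ^ n * ∑ i ∈ s, a i ^ (n + 1) / e i ^ n := by
        have hp0 : ((n + 1 : ℕ) : ℝ) ≠ 0 := by positivity
        have h1 : (1 - ((n + 1 : ℕ) : ℝ)⁻¹) * (n + 1 : ℕ) = n := by field_simp; push_cast; ring
        rw [mul_pow, ← rpow_mul_natCast hE, ← rpow_mul_natCast hT, h1, inv_mul_cancel₀ hp0,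
          rpow_natCast, rpow_one]

theorem sum_pow_succ_div_mul_pow (n : ℕ) (ha : ∀ i, a i ≠ 0) (c : ℝ) :
    ∑ i ∈ s, a i ^ (n + 1) / (a i * c) ^ n = (∑ i ∈ s, a i) / c ^ n := by
  rw [sum_div]
  refine sum_congr rfl fun i _ => ?_
  rw [mul_pow, ← div_div, pow_succ, mul_div_cancel_left₀ _ (pow_ne_zero _ (ha i))]

end Finset

theorem weighted_budget_optimal {ι : Type*} [Fintype ι] [Nonempty ι] {a : ι → ℝ}
    (ha : ∀ i, 0 < a i) (ε : ℝ) :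
    (∀ e : ι → ℝ, (∀ i, 0 < e i) → ∑ i, e i = ε →
      (∑ i, a i) ^ 3 / ε ^ 2 ≤ ∑ i, a i ^ 3 / e i ^ 2) ∧
    ∑ i, a i * (ε / ∑ j, a j) = ε ∧
    ∑ i, a i ^ 3 / (a i * (ε / ∑ j, a j)) ^ 2 = (∑ i, a i) ^ 3 / ε ^ 2 := by
  have hS : 0 < ∑ i, a i := sum_pos (fun i _ => ha i) univ_nonempty
  refine ⟨fun e he hsum => ?_, ?_, ?_⟩
  · have radon := univ.pow_succ_sum_le_pow_sum_mul_sum_div 2 (fun i => (ha i).le) he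
    rw [hsum] at radon
    exact div_le_of_le_mul₀ (sq_nonneg ε)
      (sum_nonneg fun i _ => div_nonneg (pow_nonneg (ha i).le _) (pow_nonneg (he i).le _))
      (by linarith)
  · rw [← sum_mul]
    field_simp
  · rw [univ.sum_pow_succ_div_mul_pow 2 (fun i => (ha i).ne'), div_pow, div_div_eq_mul_div]
    ring

theorem rpow_natCast_div {b : ℝ} (hb : 0 ≤ b) (m : ℕ) (k : ℝ) :
    b ^ ((m : ℝ) / k) = (b ^ (1 / k)) ^ m := by
  rw [← rpow_mul_natCast hb, one_div_mul_eq_div]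

theorem Fin.sum_pow_sub_eq_div {r : ℝ} (hr : r ≠ 1) (h : ℕ) :
    ∑ i : Fin (h + 1), r ^ (h - i.val) = (r ^ (h + 1) - 1) / (r - 1) := by
  rw [Fin.sum_univ_eq_sum_range (fun j => r ^ (h - j)), ← geom_sum_eq hr,
    ← sum_range_reflect (fun j => r ^ j)]
  simp

theorem geometric_budget_optimal_general (h : ℕ) (ε : ℝ) :
    (∀ e : Fin (h + 1) → ℝ, (∀ i, 0 < e i) → ∑ i, e i = ε →
      ((2 : ℝ) ^ (((h : ℝ) + 1) / 3) - 1) ^ 3 /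
          (ε ^ 2 * ((2 : ℝ) ^ ((1 : ℝ) / 3) - 1) ^ 3) ≤
        ∑ i : Fin (h + 1), (2 : ℝ) ^ (h - i.val) / (e i) ^ 2) ∧
    (∑ i : Fin (h + 1),
        (2 : ℝ) ^ (((h : ℝ) - (i.val : ℝ)) / 3) * ε *
          ((2 : ℝ) ^ ((1 : ℝ) / 3) - 1) / ((2 : ℝ) ^ (((h : ℝ) + 1) / 3) - 1) = ε) ∧
    (∑ i : Fin (h + 1), (2 : ℝ) ^ (h - i.val) /
        ((2 : ℝ) ^ (((h : ℝ) - (i.val : ℝ)) / 3) * ε *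
          ((2 : ℝ) ^ ((1 : ℝ) / 3) - 1) / ((2 : ℝ) ^ (((h : ℝ) + 1) / 3) - 1)) ^ 2 =
      ((2 : ℝ) ^ (((h : ℝ) + 1) / 3) - 1) ^ 3 /
        (ε ^ 2 * ((2 : ℝ) ^ ((1 : ℝ) / 3) - 1) ^ 3)) := by
  set r : ℝ := (2 : ℝ) ^ ((1 : ℝ) / 3) with hr
  have hr1 : 1 < r := one_lt_rpow one_lt_two (by norm_num)
  have hr3 : r ^ 3 = 2 := by rw [hr, ← rpow_mul_natCast zero_le_two]; norm_num
  set a : Fin (h + 1) → ℝ := fun i => r ^ (h - i.val) with ha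
  have h_a (i : Fin (h + 1)) : (2 : ℝ) ^ (((h : ℝ) - (i.val : ℝ)) / 3) = a i := by
    rw [← Nat.cast_sub i.is_le, rpow_natCast_div zero_le_two]
  have h_cube (i : Fin (h + 1)) : (2 : ℝ) ^ (h - i.val) = a i ^ 3 := by
    rw [ha, ← pow_mul, mul_comm, pow_mul, hr3]
  have hr0 : r - 1 ≠ 0 := sub_ne_zero.2 hr1.ne'
  have h_sum : (2 : ℝ) ^ (((h : ℝ) + 1) / 3) - 1 = (∑ i, a i) * (r - 1) := by
    rw [ha, Fin.sum_pow_sub_eq_div hr1.ne', div_mul_cancel₀ _ hr0, ← Nat.cast_succ,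
      rpow_natCast_div zero_le_two]
  have h_alloc (i : Fin (h + 1)) :
      a i * ε * (r - 1) / ((∑ j, a j) * (r - 1)) = a i * (ε / ∑ j, a j) := by
    rw [mul_div_mul_right _ _ hr0, mul_div_assoc]
  have h_min : ((∑ i, a i) * (r - 1)) ^ 3 / (ε ^ 2 * (r - 1) ^ 3) = (∑ i, a i) ^ 3 / ε ^ 2 := by
    rw [mul_pow, mul_div_mul_right _ _ (pow_ne_zero 3 hr0)]
  simp only [h_a, h_cube, h_sum, h_alloc, h_min]
  exact weighted_budget_optimal (fun i => pow_pos (zero_lt_one.trans hr1) _) ε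

/-- Among all positive sequences `(ε_0, …, ε_h)` with `∑ ε_i = ε`, the sum
`∑_{i=0}^h 2^(h−i)/ε_i²` is minimized by
`ε_i = 2^((h−i)/3)·ε·(2^(1/3)−1)/(2^((h+1)/3)−1)`, with minimum value
`(2^((h+1)/3)−1)³ / (ε²·(2^(1/3)−1)³)`. -/
theorem geometric_budget_optimal (h : ℕ) (ε : ℝ) (hε : 0 < ε) :
    (∀ e : Fin (h + 1) → ℝ, (∀ i, 0 < e i) → ∑ i, e i = ε →
      ((2 : ℝ) ^ (((h : ℝ) + 1) / 3) - 1) ^ 3 /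
          (ε ^ 2 * ((2 : ℝ) ^ ((1 : ℝ) / 3) - 1) ^ 3) ≤
        ∑ i : Fin (h + 1), (2 : ℝ) ^ (h - i.val) / (e i) ^ 2) ∧
    (∑ i : Fin (h + 1),
        (2 : ℝ) ^ (((h : ℝ) - (i.val : ℝ)) / 3) * ε *
          ((2 : ℝ) ^ ((1 : ℝ) / 3) - 1) / ((2 : ℝ) ^ (((h : ℝ) + 1) / 3) - 1) = ε) ∧
    (∑ i : Fin (h + 1), (2 : ℝ) ^ (h - i.val) /
        ((2 : ℝ) ^ (((h : ℝ) - (i.val : ℝ)) / 3) * ε *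
          ((2 : ℝ) ^ ((1 : ℝ) / 3) - 1) / ((2 : ℝ) ^ (((h : ℝ) + 1) / 3) - 1)) ^ 2 =
      ((2 : ℝ) ^ (((h : ℝ) + 1) / 3) - 1) ^ 3 /
        (ε ^ 2 * ((2 : ℝ) ^ ((1 : ℝ) / 3) - 1) ^ 3)) :=
  geometric_budget_optimal_general h ε
end

section
/- Consider a root node a with f children, where the root's noisy count Y_a has Laplace noise with parameter ε₁ and each child's noisy count has independent Laplace noise with parameter ε₀. The linear estimator β_a = (f·ε₁²/(f·ε₁²+ε₀²))·Y_a + (ε₀²/(f·ε₁²+ε₀²))·(sum of children's noisy counts) is unbiased for the root's true count and has variance 2f/(f·ε₁²+ε₀²), which is strictly less than Var(Y_a) = 2/ε₁² and is minimal among all convex combinations λY_a + (1−λ)(sum of children). -/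
/-!
Both `Y_a` and `∑ u, Y_u` are unbiased for `C_a`, so every combination
`λ Y_a + (1 - λ) ∑ u, Y_u` is, and by independence its variance is the quadratic
`λ² a + (1 - λ)² b` with `a = 2/ε₁²` and `b = 2f/ε₀²`. The identity
`(a + b)(λ² a + (1 - λ)² b) - a b = (λ (a + b) - b)²` shows that this quadratic is minimised
at `λ = b/(a + b) = f ε₁²/(f ε₁² + ε₀²)`, with minimum `a b/(a + b) < a`.
-/

open MeasureTheory ProbabilityTheory

section InverseVarianceWeighting

variable {a b : ℝ}

lemma mul_div_add_le_sq_mul_add_one_sub_sq_mul (hab : 0 < a + b) (t : ℝ) :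
    a * b / (a + b) ≤ t ^ 2 * a + (1 - t) ^ 2 * b := by
  rw [div_le_iff₀ hab]
  nlinarith [sq_nonneg (t * (a + b) - b)]

lemma sq_mul_add_one_sub_sq_mul_of_eq_div (hab : a + b ≠ 0) :
    (b / (a + b)) ^ 2 * a + (1 - b / (a + b)) ^ 2 * b = a * b / (a + b) := by
  field_simp
  ring

lemma mul_div_add_lt_left (ha : 0 < a) (hb : 0 < b) : a * b / (a + b) < a := by
  rw [div_lt_iff₀ (by positivity)]
  nlinarith [mul_pos ha ha]

end InverseVarianceWeighting

section LinearCombination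

variable {Ω ι : Type*} [MeasurableSpace Ω] {μ : Measure Ω} [IsProbabilityMeasure μ]
  [Fintype ι] {X : ι → Ω → ℝ}

lemma integral_const_add_sum_mul (hX : ∀ i, Integrable (X i) μ) (c : ℝ) (w : ι → ℝ) :
    ∫ ω, c + ∑ i, w i * X i ω ∂μ = c + ∑ i, w i * ∫ ω, X i ω ∂μ := by
  have hwX : ∀ i, Integrable (fun ω => w i * X i ω) μ := fun i => (hX i).const_mul (w i)
  rw [integral_add (integrable_const c) (integrable_finsetSum _ fun i _ => hwX i),
    integral_const, integral_finsetSum _ fun i _ => hwX i]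
  simp [integral_const_mul]

lemma iIndepFun.variance_const_add_sum_mul (hindep : iIndepFun X μ) (hX : ∀ i, MemLp (X i) 2 μ)
    (c : ℝ) (w : ι → ℝ) :
    variance (fun ω => c + ∑ i, w i * X i ω) μ = ∑ i, w i ^ 2 * variance (X i) μ := by
  have hwX : ∀ i, MemLp (fun ω => w i * X i ω) 2 μ := fun i => (hX i).const_mul (w i)
  have hsum : (fun ω => ∑ i, w i * X i ω) = ∑ i, fun ω => w i * X i ω := by
    funext ω
    simp
  rw [variance_const_add (hsum ▸ (memLp_finsetSum' _ fun i _ => hwX i)).1, hsum,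
    IndepFun.variance_sum (fun i _ => hwX i) fun i _ j _ hij =>
      (hindep.indepFun hij).comp (measurable_const_mul (w i)) (measurable_const_mul (w j))]
  simp only [variance_const_mul]

end LinearCombination

/-- For a root node `a` with `f` children, whose noisy counts are
`Y_a = C_a + X_a` (Laplace parameter `ε₁`, variance `2/ε₁²`) and
`Y_u = C_u + X_u` (Laplace parameter `ε₀`, variance `2/ε₀²`), with independent
mean-zero noise and consistent true counts (`C_a = ∑ u, C_u`), the estimator
`β_a = (f ε₁²/(f ε₁²+ε₀²))·Y_a + (ε₀²/(f ε₁²+ε₀²))·∑ u, Y_u`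
is unbiased for `C_a`, has variance `2f/(f ε₁²+ε₀²)`, which is strictly less
than `Var Y_a = 2/ε₁²`, and is minimal among all estimators
`λ·Y_a + (1−λ)·∑ u, Y_u`. -/
theorem root_child_estimator
    {Ω : Type*} [MeasureSpace Ω] [IsProbabilityMeasure (volume : Measure Ω)]
    (f : ℕ) (hf : 0 < f) (ε₀ ε₁ : ℝ) (h₀ : 0 < ε₀) (h₁ : 0 < ε₁)
    (C : Fin f → ℝ) (Ca : ℝ) (hC : Ca = ∑ u, C u)
    (X : Fin (f + 1) → Ω → ℝ)
    (hindep : iIndepFun X volume)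
    (hmem : ∀ i, MemLp (X i) 2 volume)
    (hmean : ∀ i, ∫ ω, X i ω = 0)
    (hvar₁ : variance (X 0) volume = 2 / ε₁ ^ 2)
    (hvar₀ : ∀ u : Fin f, variance (X u.succ) volume = 2 / ε₀ ^ 2)
    (Ya : Ω → ℝ) (hYa : Ya = fun ω => Ca + X 0 ω)
    (Yu : Fin f → Ω → ℝ) (hYu : Yu = fun u ω => C u + X u.succ ω)
    (βa : Ω → ℝ)
    (hβa : βa = fun ω =>
      ((f : ℝ) * ε₁ ^ 2 / ((f : ℝ) * ε₁ ^ 2 + ε₀ ^ 2)) * Ya ω +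
      (ε₀ ^ 2 / ((f : ℝ) * ε₁ ^ 2 + ε₀ ^ 2)) * ∑ u, Yu u ω) :
    (∫ ω, βa ω = Ca) ∧
    variance βa volume = 2 * (f : ℝ) / ((f : ℝ) * ε₁ ^ 2 + ε₀ ^ 2) ∧
    variance βa volume < 2 / ε₁ ^ 2 ∧
    (∀ lam : ℝ, variance βa volume ≤
      variance (fun ω => lam * Ya ω + (1 - lam) * ∑ u, Yu u ω) volume) := by
  set a : ℝ := 2 / ε₁ ^ 2
  set b : ℝ := f * (2 / ε₀ ^ 2)
  have ha : 0 < a := by positivity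
  have hb : 0 < b := by positivity
  have hcomb : ∀ lam : ℝ, (fun ω => lam * Ya ω + (1 - lam) * ∑ u, Yu u ω) =
      fun ω => Ca + ∑ i, (Fin.cons lam fun _ => 1 - lam : Fin (f + 1) → ℝ) i * X i ω := by
    intro lam
    funext ω
    simp only [hYa, hYu, hC, Fin.sum_univ_succ, Fin.cons_zero, Fin.cons_succ,
      Finset.sum_add_distrib, ← Finset.mul_sum]
    ring
  have hunbiased : ∀ lam : ℝ, ∫ ω, lam * Ya ω + (1 - lam) * ∑ u, Yu u ω = Ca := fun lam => by
    rw [hcomb, integral_const_add_sum_mul (fun i => (hmem i).integrable one_le_two)]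
    simp [hmean]
  have hvar : ∀ lam : ℝ, variance (fun ω => lam * Ya ω + (1 - lam) * ∑ u, Yu u ω) volume =
      lam ^ 2 * a + (1 - lam) ^ 2 * b := fun lam => by
    rw [hcomb, iIndepFun.variance_const_add_sum_mul hindep hmem, Fin.sum_univ_succ]
    simp [hvar₁, hvar₀, a, b]
    ring
  have hweight : (f : ℝ) * ε₁ ^ 2 / ((f : ℝ) * ε₁ ^ 2 + ε₀ ^ 2) = b / (a + b) := by
    simp only [a, b]
    field_simp
    ring
  have hβ : βa = fun ω => b / (a + b) * Ya ω + (1 - b / (a + b)) * ∑ u, Yu u ω := by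
    rw [hβa, ← hweight]
    funext ω
    field_simp
    ring
  have hvarβ : variance βa volume = a * b / (a + b) := by
    rw [hβ, hvar, sq_mul_add_one_sub_sq_mul_of_eq_div (by positivity)]
  refine ⟨hβ ▸ hunbiased _, ?_, hvarβ ▸ mul_div_add_lt_left ha hb, fun lam => ?_⟩
  · rw [hvarβ]
    simp only [a, b]
    field_simp
    ring
  · rw [hvarβ, hvar]
    exact mul_div_add_le_sq_mul_add_one_sub_sq_mul (by positivity) lam
end

section
/- Let T be a complete tree with fanout f and height h, with nodes v assigned noisy counts Y_v = C_v + X_v where C_v is the true count (consistent: C_v = Σ_{children u} C_u) and X_v are independent with Var(X_v) = 2/ε_{h(v)}², ε depending only on the level. Then the ordinary least squares estimator β (the consistent vector minimizing Σ_v ε_{h(v)}²(Y_v−β_v)²) satisfies, for every node v: (Σ_{j=0}^{h(v)} f^j ε_j²)·β_v + f^{h(v)}·Σ_{w strict ancestor of v} ε_{h(w)}² β_w = Σ_{leaves u in subtree(v)} Σ_{w ∈ anc(u)} ε_{h(w)}² Y_w. -/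
open Finset

/-!
For a leaf `m`, the indicator of the path from `m` to the root is consistent, so perturbing `β`
along it and using minimality gives the normal equation `∑_{w ∈ anc(m)} ε_{h(w)}² (Y_w - β_w) = 0`.
Summing these equations over the leaves `u` of the subtree of `v`: a level `j ≤ h(v)` contributes
`f^j ε_j² β_v`, since each of the descendants of `v` at level `j` has `f^j` leaves and their values
add up to `β_v` by consistency; a strict ancestor of `v` is shared by all `f^{h(v)}` leaves.
-/

/-- A vector of node values on the complete tree of fanout `f` and height `h`
(nodes at height `j` are indexed by `k < f^(h-j)`; the children of node
`(j+1, k)` are `(j, k·f + r)` for `r < f`) is consistent if the value of every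
internal node is the sum of the values of its children. -/
def Consistent (f h : ℕ) (b : ℕ → ℕ → ℝ) : Prop :=
  ∀ j < h, ∀ k < f ^ (h - (j + 1)),
    b (j + 1) k = ∑ r ∈ Finset.range f, b j (k * f + r)

/-- The weighted least-squares objective `∑_v ε_{h(v)}²·(Y_v − b_v)²`. -/
def lsObjective (f h : ℕ) (ε : ℕ → ℝ) (Y b : ℕ → ℕ → ℝ) : ℝ :=
  ∑ j ∈ Finset.range (h + 1), ∑ k ∈ Finset.range (f ^ (h - j)),
    ε j ^ 2 * (Y j k - b j k) ^ 2

theorem sum_range_mul_eq_sum_sum {M : Type*} [AddCommMonoid M] (g : ℕ → M) (a b : ℕ) :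
    ∑ x ∈ range (a * b), g x = ∑ i ∈ range a, ∑ s ∈ range b, g (i * b + s) := by
  induction a with
  | zero => simp
  | succ a ih => rw [add_mul, one_mul, sum_range_add, ih, sum_range_succ]

namespace Nat

theorem mul_add_div_of_lt {k n u : ℕ} (hu : u < n) : (k * n + u) / n = k :=
  Nat.div_eq_of_lt_le (Nat.le_add_right _ _) (by rw [add_mul, one_mul]; omega)

theorem mul_pow_add_div_pow_of_le {f k u l j : ℕ} (hu : u < f ^ l) (hlj : l ≤ j) :
    (k * f ^ l + u) / f ^ j = k / f ^ (j - l) := by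
  rw [← Nat.add_sub_cancel' hlj, pow_add, ← Nat.div_div_eq_div_mul, mul_add_div_of_lt hu,
    Nat.add_sub_cancel_left]

end Nat

theorem sum_range_pow_comp_div_pow {M : Type*} [AddCommMonoid M] (g : ℕ → M) {f j l : ℕ}
    (k : ℕ) (hjl : j ≤ l) :
    ∑ u ∈ range (f ^ l), g ((k * f ^ l + u) / f ^ j) =
      f ^ j • ∑ i ∈ range (f ^ (l - j)), g (k * f ^ (l - j) + i) := by
  have hpow : f ^ l = f ^ (l - j) * f ^ j := by rw [← pow_add, Nat.sub_add_cancel hjl]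
  rw [hpow, sum_range_mul_eq_sum_sum, smul_sum]
  refine sum_congr rfl fun i _ => ?_
  refine (sum_congr rfl fun s hs => congrArg g ?_).trans (by rw [sum_const, card_range])
  rw [show k * (f ^ (l - j) * f ^ j) + (i * f ^ j + s) = (k * f ^ (l - j) + i) * f ^ j + s by ring,
    Nat.mul_add_div_of_lt (mem_range.1 hs)]

namespace Consistent

variable {f h : ℕ} {b e : ℕ → ℕ → ℝ}

theorem add_smul (hb : Consistent f h b) (he : Consistent f h e) (t : ℝ) :
    Consistent f h (b + t • e) := fun j hj k hk => by
  simp [hb j hj k hk, he j hj k hk, sum_add_distrib, mul_sum]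

theorem eq_sum_descendants (hb : Consistent f h b) {j l : ℕ} (hjl : j ≤ l) (hlh : l ≤ h)
    {k : ℕ} (hk : k < f ^ (h - l)) :
    b l k = ∑ i ∈ range (f ^ (l - j)), b j (k * f ^ (l - j) + i) := by
  induction l, hjl using Nat.le_induction generalizing k with
  | base => simp
  | succ l hjl ih =>
    have hchild : ∀ r ∈ range f, k * f + r < f ^ (h - l) := fun r hr => by
      rw [show h - l = h - (l + 1) + 1 by omega, pow_succ, mul_comm k f]
      exact Nat.mul_add_lt_mul_of_lt_of_lt hk (mem_range.1 hr)
    rw [hb l (by omega) k hk, show l + 1 - j = l - j + 1 by omega, pow_succ',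
      sum_range_mul_eq_sum_sum]
    refine sum_congr rfl fun r hr => ?_
    rw [ih (by omega) (hchild r hr)]
    refine sum_congr rfl fun i _ => ?_
    ring_nf

theorem sum_range_pow_div_pow (hb : Consistent f h b) {j l : ℕ} (hjl : j ≤ l) (hlh : l ≤ h)
    {k : ℕ} (hk : k < f ^ (h - l)) :
    ∑ u ∈ range (f ^ l), b j ((k * f ^ l + u) / f ^ j) = (f : ℝ) ^ j * b l k := by
  rw [sum_range_pow_comp_div_pow _ k hjl, ← hb.eq_sum_descendants hjl hlh hk, nsmul_eq_mul,
    Nat.cast_pow]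

end Consistent

theorem sum_range_ite_mul_add_eq {f : ℕ} (hf : 0 < f) (k n : ℕ) :
    ∑ r ∈ range f, (if k * f + r = n then (1 : ℝ) else 0) = if k = n / f then 1 else 0 := by
  split_ifs with hk
  · have hiff : ∀ r, k * f + r = n ↔ r = n % f := fun r => by
      have := Nat.div_add_mod' n f
      rw [hk]
      generalize n / f * f = q at this ⊢
      omega
    simp [hiff, Nat.mod_lt n hf]
  · refine sum_eq_zero fun r hr => if_neg fun hn => hk ?_
    rw [← hn, Nat.mul_add_div_of_lt (mem_range.1 hr)]

def pathIndicator (f m : ℕ) (j k : ℕ) : ℝ :=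
  if k = m / f ^ j then 1 else 0

theorem consistent_pathIndicator {f : ℕ} (hf : 0 < f) (h m : ℕ) :
    Consistent f h (pathIndicator f m) := fun j _ k _ => by
  simp only [pathIndicator, sum_range_ite_mul_add_eq hf, pow_succ, Nat.div_div_eq_div_mul]

theorem eq_zero_of_forall_nonneg_mul_sq_add_mul {a b : ℝ} (h : ∀ t, 0 ≤ a * t ^ 2 + b * t) :
    b = 0 := by
  have hd : HasDerivAt (fun t => a * t ^ 2 + b * t) (a * (2 * 0 ^ 1) + b * 1) 0 :=
    ((hasDerivAt_pow 2 (0 : ℝ)).const_mul a).add ((hasDerivAt_id' 0).const_mul b)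
  simpa using IsLocalMin.hasDerivAt_eq_zero
    (Filter.Eventually.of_forall fun t => by simpa using h t) hd

theorem lsObjective_add_smul (f h : ℕ) (ε : ℕ → ℝ) (Y b e : ℕ → ℕ → ℝ) (t : ℝ) :
    lsObjective f h ε Y (b + t • e) = lsObjective f h ε Y b +
      ((∑ j ∈ range (h + 1), ∑ k ∈ range (f ^ (h - j)), ε j ^ 2 * e j k ^ 2) * t ^ 2 +
        -2 * (∑ j ∈ range (h + 1), ∑ k ∈ range (f ^ (h - j)),
          ε j ^ 2 * (Y j k - b j k) * e j k) * t) := by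
  simp only [lsObjective, sum_mul, mul_sum, ← sum_add_distrib]
  refine sum_congr rfl fun j _ => sum_congr rfl fun k _ => ?_
  simp only [Pi.add_apply, Pi.smul_apply, smul_eq_mul]
  ring

theorem sum_residual_mul_eq_zero_of_isMin {f h : ℕ} {ε : ℕ → ℝ} {Y β e : ℕ → ℕ → ℝ}
    (hcons : Consistent f h β)
    (hmin : ∀ b : ℕ → ℕ → ℝ, Consistent f h b →
      lsObjective f h ε Y β ≤ lsObjective f h ε Y b)
    (he : Consistent f h e) :
    ∑ j ∈ range (h + 1), ∑ k ∈ range (f ^ (h - j)), ε j ^ 2 * (Y j k - β j k) * e j k = 0 := by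
  have := eq_zero_of_forall_nonneg_mul_sq_add_mul fun t => by
    have := hmin _ (hcons.add_smul he t)
    rwa [lsObjective_add_smul, le_add_iff_nonneg_right] at this
  linarith

theorem sum_path_eq_of_isMin {f h : ℕ} (hf : 0 < f) {ε : ℕ → ℝ} {Y β : ℕ → ℕ → ℝ}
    (hcons : Consistent f h β)
    (hmin : ∀ b : ℕ → ℕ → ℝ, Consistent f h b →
      lsObjective f h ε Y β ≤ lsObjective f h ε Y b)
    {m : ℕ} (hm : m < f ^ h) :
    ∑ j ∈ range (h + 1), ε j ^ 2 * Y j (m / f ^ j) =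
      ∑ j ∈ range (h + 1), ε j ^ 2 * β j (m / f ^ j) := by
  have hanc : ∀ j ∈ range (h + 1), m / f ^ j ∈ range (f ^ (h - j)) := fun j hj => by
    refine mem_range.2 <| Nat.div_lt_of_lt_mul (hm.trans_eq ?_)
    rw [← pow_add, Nat.add_sub_cancel' (Nat.lt_succ_iff.1 (mem_range.1 hj))]
  have := sum_residual_mul_eq_zero_of_isMin hcons hmin (consistent_pathIndicator hf h m)
  simp only [pathIndicator, mul_ite, mul_one, mul_zero, sum_ite_eq'] at this
  rw [sum_congr rfl fun j hj => if_pos (hanc j hj)] at this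
  simp only [mul_sub, sum_sub_distrib] at this
  linarith

/-- The ancestor of leaf `u` at height `j` has index `u / f^j`; the strict ancestors
of node `(l, k)` are the nodes `(j, k / f^(j-l))` for `l < j ≤ h`; the leaves of
the subtree of `(l, k)` are the leaves `k·f^l + u` for `u < f^l`. -/
theorem ols_recurrence_general (f h : ℕ) (hf : 2 ≤ f) (ε : ℕ → ℝ)
    (Y β : ℕ → ℕ → ℝ)
    (hcons : Consistent f h β)
    (hmin : ∀ b : ℕ → ℕ → ℝ, Consistent f h b →
      lsObjective f h ε Y β ≤ lsObjective f h ε Y b)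
    (l k : ℕ) (hl : l ≤ h) (hk : k < f ^ (h - l)) :
    (∑ j ∈ Finset.range (l + 1), (f : ℝ) ^ j * ε j ^ 2) * β l k +
      (f : ℝ) ^ l *
        ∑ j ∈ Finset.Icc (l + 1) h, ε j ^ 2 * β j (k / f ^ (j - l)) =
    ∑ u ∈ Finset.range (f ^ l), ∑ j ∈ Finset.range (h + 1),
      ε j ^ 2 * Y j ((k * f ^ l + u) / f ^ j) := by
  have hleaf : ∀ u ∈ range (f ^ l), k * f ^ l + u < f ^ h := fun u hu => by
    rw [← Nat.sub_add_cancel hl, pow_add, mul_comm k]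
    exact Nat.mul_add_lt_mul_of_lt_of_lt hk (mem_range.1 hu)
  have hbelow : ∀ j ∈ range (l + 1),
      ∑ u ∈ range (f ^ l), ε j ^ 2 * β j ((k * f ^ l + u) / f ^ j) =
        (f : ℝ) ^ j * ε j ^ 2 * β l k := fun j hj => by
    rw [← mul_sum, hcons.sum_range_pow_div_pow (Nat.lt_succ_iff.1 (mem_range.1 hj)) hl hk]
    ring
  have habove : ∀ j ∈ Icc (l + 1) h,
      ∑ u ∈ range (f ^ l), ε j ^ 2 * β j ((k * f ^ l + u) / f ^ j) =
        (f : ℝ) ^ l * (ε j ^ 2 * β j (k / f ^ (j - l))) := fun j hj => by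
    have hlj : l ≤ j := Nat.le_of_succ_le (mem_Icc.1 hj).1
    rw [sum_congr rfl fun u hu => by rw [Nat.mul_pow_add_div_pow_of_le (mem_range.1 hu) hlj],
      sum_const, card_range, nsmul_eq_mul, Nat.cast_pow]
  calc
    _ = ∑ j ∈ range (l + 1), ∑ u ∈ range (f ^ l), ε j ^ 2 * β j ((k * f ^ l + u) / f ^ j) +
        ∑ j ∈ Icc (l + 1) h, ∑ u ∈ range (f ^ l), ε j ^ 2 * β j ((k * f ^ l + u) / f ^ j) := by
      rw [sum_congr rfl hbelow, sum_congr rfl habove, ← sum_mul, ← mul_sum]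
    _ = ∑ j ∈ range (h + 1), ∑ u ∈ range (f ^ l), ε j ^ 2 * β j ((k * f ^ l + u) / f ^ j) := by
      rw [← Ico_add_one_right_eq_Icc, sum_range_add_sum_Ico _ (by omega)]
    _ = _ := by
      rw [sum_comm]
      exact sum_congr rfl fun u hu =>
        (sum_path_eq_of_isMin (by omega) hcons hmin (hleaf u hu)).symm

/-- Recurrence for the OLS estimator on a complete tree of fanout `f` and
height `h` with level-dependent noise parameters: for every node `v = (l, k)`,
`(∑_{j=0}^{h(v)} f^j ε_j²)·β_v + f^{h(v)}·∑_{w strict ancestor of v} ε_{h(w)}²·β_w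
  = ∑_{leaves u ≺ v} ∑_{w ∈ anc(u)} ε_{h(w)}²·Y_w`.
The ancestor of leaf `u` at height `j` has index `u / f^j`; the strict ancestors
of node `(l, k)` are the nodes `(j, k / f^(j-l))` for `l < j ≤ h`; the leaves of
the subtree of `(l, k)` are the leaves `k·f^l + u` for `u < f^l`. -/
theorem ols_recurrence (f h : ℕ) (hf : 2 ≤ f) (ε : ℕ → ℝ) (hε : ∀ j, 0 < ε j)
    (Y β : ℕ → ℕ → ℝ)
    (hcons : Consistent f h β)
    (hmin : ∀ b : ℕ → ℕ → ℝ, Consistent f h b →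
      lsObjective f h ε Y β ≤ lsObjective f h ε Y b)
    (l k : ℕ) (hl : l ≤ h) (hk : k < f ^ (h - l)) :
    (∑ j ∈ Finset.range (l + 1), (f : ℝ) ^ j * ε j ^ 2) * β l k +
      (f : ℝ) ^ l *
        ∑ j ∈ Finset.Icc (l + 1) h, ε j ^ 2 * β j (k / f ^ (j - l)) =
    ∑ u ∈ Finset.range (f ^ l), ∑ j ∈ Finset.range (h + 1),
      ε j ^ 2 * Y j ((k * f ^ l + u) / f ^ j) :=
  ols_recurrence_general f h hf ε Y β hcons hmin l k hl hk
end

section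
/- Let A be an ε-differentially private algorithm and 0 < p < 1. The algorithm that first includes each element of the input dataset independently with probability p into a sample S, and then outputs A(S), is 2p·e^ε-differentially private. -/
open MeasureTheory

/-- An algorithm `A` is `ε`-differentially private. -/
def DiffPrivate {T Ω : Type*} [MeasurableSpace Ω]
    (ε : ℝ) (A : Multiset T → Measure Ω) : Prop :=
  ∀ D₁ D₂ : Multiset T, Neighboring D₁ D₂ → ∀ S : Set Ω, MeasurableSet S →
    A D₁ S ≤ ENNReal.ofReal (Real.exp ε) * A D₂ S

/-- The output distribution of "sample each element of `D` independently with
probability `p`, then run `A` on the sample": the mixture over all position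
subsamples `S` of `D`, weighted by `p^|S|·(1-p)^(|D|-|S|)`. -/
noncomputable def sampledAlgorithm {T Ω : Type*} [MeasurableSpace Ω]
    (A : Multiset T → Measure Ω) (p : ℝ) (D : Multiset T) : Measure Ω :=
  (D.powerset.map (fun S =>
    ENNReal.ofReal (p ^ Multiset.card S * (1 - p) ^ (Multiset.card D - Multiset.card S)) •
      A S)).sum

/-!
Splitting the subsamples of `t ::ₘ D` according to whether they contain `t` writes the output
on `t ::ₘ D` as the mixture `∑ S, w S • ((1 - p) • A S + p • A (t ::ₘ S))` over the
subsamples `S` of `D`, with `w S = p ^ |S| * (1 - p) ^ (|D| - |S|)`, while the output on `D`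
is `∑ S, w S • A S`. So it suffices to compare `(1 - p) a + p b` with `a` when `b ≤ e^ε a` and
`a ≤ e^ε b`: in one direction the ratio is at most `1 - p + p e^ε ≤ exp (2 p e^ε)`, in the
other at most `e^ε / ((1 - p) e^ε + p)`, which is bounded by `exp (2 p e^ε)` as well.
-/open Real
open scoped ENNReal

lemma one_sub_add_mul_le_exp_two_mul {p x : ℝ} (hp : 0 ≤ p) (hx : 0 ≤ x) :
    1 - p + p * x ≤ exp (2 * p * x) := by
  nlinarith [add_one_le_exp (2 * p * x), mul_nonneg hp hx]

lemma le_exp_two_mul_mul_one_sub_mul_add {p x : ℝ} (hp0 : 0 ≤ p) (hp1 : p ≤ 1)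
    (hx : 0 ≤ x) :
    x ≤ exp (2 * p * x) * ((1 - p) * x + p) := by
  have hlin : x ≤ (1 + 2 * p * x) * ((1 - p) * x + p) := by
    nlinarith [mul_nonneg hp0 hx, mul_nonneg (mul_nonneg hp0 hx) (sub_nonneg.2 hp1),
      mul_nonneg hp0 (sq_nonneg (x - 1)),
      mul_nonneg (mul_nonneg hp0 (sub_nonneg.2 hp1)) (sq_nonneg x)]
  calc x ≤ (1 + 2 * p * x) * ((1 - p) * x + p) := hlin
    _ ≤ exp (2 * p * x) * ((1 - p) * x + p) := by
      have : 0 ≤ (1 - p) * x + p := by nlinarith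
      gcongr
      linarith [add_one_le_exp (2 * p * x)]

lemma mixture_le_of_le {a b : ℝ≥0∞} {p c : ℝ} (hp0 : 0 ≤ p) (hp1 : p ≤ 1) (hc : 0 ≤ c)
    (hba : b ≤ ENNReal.ofReal c * a) :
    ENNReal.ofReal (1 - p) * a + ENNReal.ofReal p * b ≤ ENNReal.ofReal (exp (2 * p * c)) * a :=
  calc ENNReal.ofReal (1 - p) * a + ENNReal.ofReal p * b
      ≤ ENNReal.ofReal (1 - p) * a + ENNReal.ofReal p * (ENNReal.ofReal c * a) := by gcongr
    _ = ENNReal.ofReal (1 - p + p * c) * a := by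
      rw [ENNReal.ofReal_add (by linarith) (by positivity), ENNReal.ofReal_mul hp0]
      ring
    _ ≤ ENNReal.ofReal (exp (2 * p * c)) * a := by
      gcongr
      exact one_sub_add_mul_le_exp_two_mul hp0 hc

lemma le_mixture_of_le {a b : ℝ≥0∞} {p c : ℝ} (hp0 : 0 ≤ p) (hp1 : p ≤ 1) (hc : 0 < c)
    (hab : a ≤ ENNReal.ofReal c * b) :
    a ≤ ENNReal.ofReal (exp (2 * p * c)) *
      (ENNReal.ofReal (1 - p) * a + ENNReal.ofReal p * b) := by
  have hc0 : ENNReal.ofReal c ≠ 0 := by simpa using hc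
  refine (ENNReal.mul_le_mul_iff_right hc0 ENNReal.ofReal_ne_top).1 ?_
  calc ENNReal.ofReal c * a
      ≤ ENNReal.ofReal (exp (2 * p * c) * ((1 - p) * c + p)) * a := by
        gcongr
        exact le_exp_two_mul_mul_one_sub_mul_add hp0 hp1 hc.le
    _ = ENNReal.ofReal (exp (2 * p * c)) *
          (ENNReal.ofReal (1 - p) * (ENNReal.ofReal c * a) + ENNReal.ofReal p * a) := by
        rw [ENNReal.ofReal_mul (exp_pos _).le, ENNReal.ofReal_add (by nlinarith) hp0,
          ENNReal.ofReal_mul (by linarith)]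
        ring
    _ ≤ ENNReal.ofReal (exp (2 * p * c)) *
          (ENNReal.ofReal (1 - p) * (ENNReal.ofReal c * a) +
            ENNReal.ofReal p * (ENNReal.ofReal c * b)) := by
        gcongr
    _ = ENNReal.ofReal c *
          (ENNReal.ofReal (exp (2 * p * c)) *
            (ENNReal.ofReal (1 - p) * a + ENNReal.ofReal p * b)) := by
        ring

section SampledAlgorithm

variable {T Ω : Type*} [MeasurableSpace Ω] (A : Multiset T → Measure Ω)

lemma sampledAlgorithm_apply (p : ℝ) (D : Multiset T) (s : Set Ω) :
    sampledAlgorithm A p D s =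
      (D.powerset.map (fun S =>
        ENNReal.ofReal (p ^ Multiset.card S * (1 - p) ^ (Multiset.card D - Multiset.card S)) *
          A S s)).sum := by
  rw [sampledAlgorithm]
  exact (map_multiset_sum ((Pi.evalAddMonoidHom (fun _ : Set Ω => ℝ≥0∞) s).comp
    Measure.coeAddHom) _).trans (by rw [Multiset.map_map]; rfl)

lemma sampledAlgorithm_cons_apply {p : ℝ} (hp0 : 0 ≤ p) (hp1 : p ≤ 1)
    (t : T) (D : Multiset T) (s : Set Ω) :
    sampledAlgorithm A p (t ::ₘ D) s =
      (D.powerset.map (fun S =>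
        ENNReal.ofReal (p ^ Multiset.card S * (1 - p) ^ (Multiset.card D - Multiset.card S)) *
          (ENNReal.ofReal (1 - p) * A S s + ENNReal.ofReal p * A (t ::ₘ S) s))).sum := by
  rw [sampledAlgorithm_apply, Multiset.powerset_cons, Multiset.map_add, Multiset.sum_add,
    Multiset.map_map, ← Multiset.sum_map_add]
  refine congrArg Multiset.sum (Multiset.map_congr rfl fun S hS => ?_)
  have hSD : Multiset.card S ≤ Multiset.card D :=
    Multiset.card_le_card (Multiset.mem_powerset.mp hS)
  have hw : 0 ≤ p ^ Multiset.card S * (1 - p) ^ (Multiset.card D - Multiset.card S) := by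
    have : 0 ≤ 1 - p := by linarith
    positivity
  simp only [Function.comp_apply, Multiset.card_cons]
  rw [Nat.sub_add_comm hSD, Nat.add_sub_add_right, pow_succ (1 - p), pow_succ p, ← mul_assoc,
    mul_right_comm (p ^ S.card) p, ENNReal.ofReal_mul hw, ENNReal.ofReal_mul hw]
  ring

variable {A} {ε p : ℝ}

lemma sampledAlgorithm_cons_le (hA : DiffPrivate ε A) (hp0 : 0 ≤ p) (hp1 : p ≤ 1)
    (t : T) (D : Multiset T) {s : Set Ω} (hs : MeasurableSet s) :
    sampledAlgorithm A p (t ::ₘ D) s ≤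
      ENNReal.ofReal (exp (2 * p * exp ε)) * sampledAlgorithm A p D s := by
  rw [sampledAlgorithm_cons_apply A hp0 hp1, sampledAlgorithm_apply, ← Multiset.sum_map_mul_left]
  refine Multiset.sum_map_le_sum_map _ _ fun S _ => ?_
  rw [mul_left_comm]
  gcongr
  exact mixture_le_of_le hp0 hp1 (exp_pos ε).le (hA (t ::ₘ S) S ⟨t, .inl rfl⟩ s hs)

lemma le_sampledAlgorithm_cons (hA : DiffPrivate ε A) (hp0 : 0 ≤ p) (hp1 : p ≤ 1)
    (t : T) (D : Multiset T) {s : Set Ω} (hs : MeasurableSet s) :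
    sampledAlgorithm A p D s ≤
      ENNReal.ofReal (exp (2 * p * exp ε)) * sampledAlgorithm A p (t ::ₘ D) s := by
  rw [sampledAlgorithm_cons_apply A hp0 hp1, sampledAlgorithm_apply, ← Multiset.sum_map_mul_left]
  refine Multiset.sum_map_le_sum_map _ _ fun S _ => ?_
  rw [mul_left_comm]
  gcongr
  exact le_mixture_of_le hp0 hp1 (exp_pos ε) (hA S (t ::ₘ S) ⟨t, .inr rfl⟩ s hs)

end SampledAlgorithm

theorem sampling_amplification_general {T Ω : Type*} [MeasurableSpace Ω]
    (A : Multiset T → Measure Ω)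
    (ε : ℝ) (hA : DiffPrivate ε A)
    (p : ℝ) (hp0 : 0 < p) (hp1 : p < 1) :
    DiffPrivate (2 * p * Real.exp ε) (sampledAlgorithm A p) := by
  rintro D₁ D₂ ⟨t, rfl | rfl⟩ s hs
  · exact sampledAlgorithm_cons_le hA hp0.le hp1.le t D₂ hs
  · exact le_sampledAlgorithm_cons hA hp0.le hp1.le t D₁ hs

/-- Privacy amplification by sampling: if `A` is `ε`-differentially private and
`0 < p < 1`, then sampling each input element independently with probability
`p` and running `A` on the sample is `2p·e^ε`-differentially private. -/
theorem sampling_amplification {T Ω : Type*} [MeasurableSpace Ω]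
    (A : Multiset T → Measure Ω) (hprob : ∀ D, IsProbabilityMeasure (A D))
    (ε : ℝ) (hε : 0 < ε) (hA : DiffPrivate ε A)
    (p : ℝ) (hp0 : 0 < p) (hp1 : p < 1) :
    DiffPrivate (2 * p * Real.exp ε) (sampledAlgorithm A p) :=
  sampling_amplification_general A ε hA p hp0 hp1
end
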